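/- Let α > 0 and let φ_α(x) = (α/(2·√(2π)))·|x|^{α/2 − 1}·exp(−|x|^α/2) be the density of the α-normal distribution. The differential entropy h(G_α) := −∫_ℝ φ_α(x)·ln(φ_α(x)) dx equals (1/2 − 1/α)·(γ + ln 2) + ln(2·√(2π)/α) + 1/2, where γ is the Euler–Mascheroni constant. In particular, for α = 2 this equals ln √(2π) + 1/2. -/

import Mathlib

/-! φ_α is even, and on `(0, ∞)` the substitution `x = (2u)^{1/α}` turns `φ_α(x) dx` into the
Gamma(1/2) law `u^{-1/2} e^{-u} / √π du`, while `ln φ_α(x)` becomes affine in `ln u` and `u`.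
The entropy is therefore a combination of `Γ(1/2) = √π`, `Γ(3/2) = √π / 2` and
`Γ'(1/2) = -√π (γ + 2 ln 2)`, the last one obtained by differentiating the Gamma integral under
the integral sign. -/

open MeasureTheory Real

/-- The α-normal density `φ_α(x) = (α/(2√(2π)))·|x|^{α/2−1}·exp(−|x|^α/2)`. -/
noncomputable def alphaNormalPDF (α : ℝ) (x : ℝ) : ℝ :=
  α / (2 * Real.sqrt (2 * Real.pi)) * |x| ^ (α / 2 - 1) * Real.exp (-|x| ^ α / 2)

open Set

namespace Real

lemma ofReal_rpow_mul_log_mul_exp_neg (s : ℝ) {t : ℝ} (ht : 0 ≤ t) :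
    ((t ^ (s - 1) * (log t * exp (-t)) : ℝ) : ℂ)
      = (t : ℂ) ^ ((s : ℂ) - 1) * (log t * exp (-t)) := by
  push_cast [Complex.ofReal_cpow ht]
  rfl

open Asymptotics Filter in
lemma integrableOn_rpow_mul_log_mul_exp_neg {s : ℝ} (hs : 0 < s) :
    IntegrableOn (fun t : ℝ => t ^ (s - 1) * (log t * exp (-t))) (Ioi 0) := by
  have h := (mellin_hasDerivAt_of_isBigO_rpow (E := ℂ)
      (f := fun t : ℝ => ((exp (-t) : ℝ) : ℂ)) (a := s + 1) (b := 0) (s := s)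
      ?_ ?_ (by simp) ?_ (by simpa using hs)).1
  · have h' : IntegrableOn (fun t : ℝ => ((t ^ (s - 1) * (log t * exp (-t)) : ℝ) : ℂ)) (Ioi 0) :=
      h.congr_fun (fun t ht => by simp [ofReal_rpow_mul_log_mul_exp_neg s (le_of_lt ht)])
        measurableSet_Ioi
    rw [IntegrableOn]
    simpa only [RCLike.re_to_complex, Complex.ofReal_re] using h'.re
  · exact (Complex.continuous_ofReal.comp (continuous_exp.comp continuous_neg)).continuousOn
      |>.locallyIntegrableOn measurableSet_Ioi
  · rw [← isBigO_norm_left]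
    simp_rw [Complex.norm_real, isBigO_norm_left]
    simpa only [neg_one_mul] using (isLittleO_exp_neg_mul_rpow_atTop zero_lt_one _).isBigO
  · simp_rw [neg_zero, rpow_zero]
    refine isBigO_const_of_tendsto (?_ : Tendsto _ _ (nhds (1 : ℂ))) one_ne_zero
    rw [(by simp : (1 : ℂ) = Real.exp (-0))]
    exact (Complex.continuous_ofReal.comp (continuous_exp.comp continuous_neg)).continuousWithinAt

lemma hasDerivAt_Gamma_of_pos {s : ℝ} (hs : 0 < s) :
    HasDerivAt Gamma (∫ t in Ioi 0, t ^ (s - 1) * (log t * exp (-t))) s := by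
  have hGamma : Complex.GammaIntegral =ᶠ[nhds (s : ℂ)] Complex.Gamma := by
    filter_upwards [(isOpen_lt continuous_const Complex.continuous_re).mem_nhds
      (by simpa using hs)] with z hz
    exact (Complex.Gamma_eq_integral hz).symm
  have h := ((Complex.hasDerivAt_GammaIntegral (s := s) (by simpa using hs)).congr_of_eventuallyEq
    hGamma.symm).real_of_complex
  have hI : ∫ t : ℝ in Ioi 0, (t : ℂ) ^ ((s : ℂ) - 1) * (log t * exp (-t))
      = ((∫ t in Ioi 0, t ^ (s - 1) * (log t * exp (-t)) : ℝ) : ℂ) := by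
    refine Eq.trans ?_ integral_ofReal
    exact setIntegral_congr_fun measurableSet_Ioi
      (fun t ht => (ofReal_rpow_mul_log_mul_exp_neg s (le_of_lt ht)).symm)
  rw [hI, Complex.ofReal_re] at h
  simpa [Complex.Gamma_ofReal] using h

end Real

lemma integral_rpow_neg_half_mul_exp_neg_mul_affine (A C : ℝ) :
    ∫ u in Ioi 0, u ^ (-(1 / 2) : ℝ) * exp (-u) * (A + C * log u - u)
      = √π * (A - C * (eulerMascheroniConstant + 2 * log 2) - 1 / 2) := by
  have hsplit : ∀ u ∈ Ioi (0 : ℝ), u ^ (-(1 / 2) : ℝ) * exp (-u) * (A + C * log u - u)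
      = A * (exp (-u) * u ^ ((1 / 2 : ℝ) - 1))
        + C * (u ^ ((1 / 2 : ℝ) - 1) * (log u * exp (-u)))
        - exp (-u) * u ^ ((3 / 2 : ℝ) - 1) := by
    intro u hu
    rw [show (1 / 2 : ℝ) - 1 = -(1 / 2) by norm_num,
      show (3 / 2 : ℝ) - 1 = -(1 / 2) + 1 by norm_num, rpow_add_one (ne_of_gt hu)]
    ring
  have hΓ := GammaIntegral_convergent (one_half_pos (α := ℝ))
  have hΓ' := integrableOn_rpow_mul_log_mul_exp_neg (one_half_pos (α := ℝ))
  have hΓ₃ := GammaIntegral_convergent (by norm_num : (0 : ℝ) < 3 / 2)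
  have hsum : IntegrableOn (fun u : ℝ => A * (exp (-u) * u ^ ((1 / 2 : ℝ) - 1))
      + C * (u ^ ((1 / 2 : ℝ) - 1) * (log u * exp (-u)))) (Ioi 0) :=
    (hΓ.const_mul A).add (hΓ'.const_mul C)
  rw [setIntegral_congr_fun measurableSet_Ioi hsplit, integral_sub hsum hΓ₃,
    integral_add (hΓ.const_mul A) (hΓ'.const_mul C), integral_const_mul, integral_const_mul,
    ← Gamma_eq_integral one_half_pos, ← Gamma_eq_integral (by norm_num),
    (hasDerivAt_Gamma_of_pos one_half_pos).unique hasDerivAt_Gamma_one_half,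
    show (3 / 2 : ℝ) = 1 / 2 + 1 by norm_num, Gamma_add_one one_half_pos.ne', Gamma_one_half_eq]
  ring

lemma integral_Ioi_eq_integral_comp_mul_rpow (g : ℝ → ℝ) {c p : ℝ} (hc : 0 < c) (hp : p ≠ 0) :
    ∫ x in Ioi 0, g x = ∫ u in Ioi 0, c * |p| * (c * u) ^ (p - 1) * g ((c * u) ^ p) := by
  rw [← integral_comp_rpow_Ioi g hp, ← mul_zero c, ← integral_comp_mul_left_Ioi' _ 0 hc,
    mul_zero, smul_eq_mul, ← integral_const_mul]
  simp only [smul_eq_mul, mul_assoc]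

lemma alphaNormalPDF_abs (α x : ℝ) : alphaNormalPDF α |x| = alphaNormalPDF α x := by
  simp only [alphaNormalPDF, abs_abs]

section

variable {α u : ℝ}

lemma alphaNormalPDF_two_mul_rpow_inv (hα : 0 < α) (hu : 0 < u) :
    alphaNormalPDF α ((2 * u) ^ (1 / α))
      = α / (2 * √(2 * π)) * (2 * u) ^ (1 / 2 - 1 / α) * exp (-u) := by
  have h2u : 0 < 2 * u := by positivity
  rw [alphaNormalPDF, abs_of_pos (rpow_pos_of_pos h2u _), ← rpow_mul h2u.le,
    ← rpow_mul h2u.le, one_div_mul_cancel hα.ne', rpow_one]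
  congr 3
  · field_simp
  · ring

lemma alphaNormalPDF_mul_log_two_mul_rpow_inv (hα : 0 < α) (hu : 0 < u) :
    2 * |1 / α| * (2 * u) ^ (1 / α - 1)
        * (alphaNormalPDF α ((2 * u) ^ (1 / α)) * log (alphaNormalPDF α ((2 * u) ^ (1 / α))))
      = (2 * √π)⁻¹ * (u ^ (-(1 / 2) : ℝ) * exp (-u)
          * ((log (α / (2 * √(2 * π))) + (1 / 2 - 1 / α) * log 2)
            + (1 / 2 - 1 / α) * log u - u)) := by
  have h2u : 0 < 2 * u := by positivity
  have hpow : (2 * u) ^ (1 / α - 1) * (2 * u) ^ (1 / 2 - 1 / α)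
      = (√2)⁻¹ * u ^ (-(1 / 2) : ℝ) := by
    rw [← rpow_add h2u, show 1 / α - 1 + (1 / 2 - 1 / α) = -(1 / 2) by ring,
      mul_rpow zero_le_two hu.le, rpow_neg zero_le_two, ← sqrt_eq_rpow]
  have hconst : 2 * (1 / α) * (α / (2 * √(2 * π))) * (√2)⁻¹ = (2 * √π)⁻¹ := by
    rw [sqrt_mul zero_le_two]
    field_simp
    rw [sq_sqrt zero_le_two]
  rw [alphaNormalPDF_two_mul_rpow_inv hα hu, log_mul (by positivity) (exp_pos _).ne',
    log_mul (by positivity) (rpow_pos_of_pos h2u _).ne', log_exp, log_rpow h2u,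
    log_mul two_ne_zero hu.ne', abs_of_pos (by positivity)]
  linear_combination (exp (-u) * (log (α / (2 * √(2 * π))) + (1 / 2 - 1 / α) * log 2
    + (1 / 2 - 1 / α) * log u - u)) * (2 * (1 / α) * (α / (2 * √(2 * π))) * hpow
      + u ^ (-(1 / 2) : ℝ) * hconst)

end

/-- the differential entropy `h(G_α) = −∫ φ_α ln φ_α` equals
`(1/2 − 1/α)(γ + ln 2) + ln(2√(2π)/α) + 1/2`; in particular for `α = 2` it equals
`ln √(2π) + 1/2`. -/
theorem alphaNormal_entropy (α : ℝ) (hα : 0 < α) :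
    (-∫ x, alphaNormalPDF α x * Real.log (alphaNormalPDF α x)
        = (1 / 2 - 1 / α) * (Real.eulerMascheroniConstant + Real.log 2)
          + Real.log (2 * Real.sqrt (2 * Real.pi) / α) + 1 / 2) ∧
    (α = 2 →
      -∫ x, alphaNormalPDF α x * Real.log (alphaNormalPDF α x)
        = Real.log (Real.sqrt (2 * Real.pi)) + 1 / 2) := by
  have hintegral : ∫ x, alphaNormalPDF α x * log (alphaNormalPDF α x)
      = log (α / (2 * √(2 * π))) - (1 / 2 - 1 / α) * (eulerMascheroniConstant + log 2)
        - 1 / 2 := by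
    calc ∫ x, alphaNormalPDF α x * log (alphaNormalPDF α x)
        = 2 * ∫ x in Ioi 0, alphaNormalPDF α x * log (alphaNormalPDF α x) := by
          simpa only [alphaNormalPDF_abs] using
            integral_comp_abs (f := fun x => alphaNormalPDF α x * log (alphaNormalPDF α x))
      _ = 2 * ∫ u in Ioi 0, (2 * √π)⁻¹ * (u ^ (-(1 / 2) : ℝ) * exp (-u)
            * ((log (α / (2 * √(2 * π))) + (1 / 2 - 1 / α) * log 2)
              + (1 / 2 - 1 / α) * log u - u)) := by
          rw [integral_Ioi_eq_integral_comp_mul_rpow _ two_pos (one_div_ne_zero hα.ne'),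
            setIntegral_congr_fun measurableSet_Ioi
              (fun u hu => alphaNormalPDF_mul_log_two_mul_rpow_inv hα hu)]
      _ = _ := by
          rw [integral_const_mul, integral_rpow_neg_half_mul_exp_neg_mul_affine]
          field_simp
          ring
  have hlog : log (α / (2 * √(2 * π))) = -log (2 * √(2 * π) / α) := by
    rw [← log_inv, inv_div]
  refine ⟨by rw [hintegral, hlog]; ring, fun h2 => ?_⟩
  subst h2
  rw [hintegral, hlog, mul_div_cancel_left₀ _ two_ne_zero]
  ring
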